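/- arXiv:1604.04674 — 9 statements merged into one kernel-verified Lean document; each statement's English description precedes it below -/
import Mathlib

section
/- Let M be an m × n real matrix with rows v_1, ..., v_m, and let σ, τ : [m] → [n] be functions such that the multisets σ([m]) and τ([m]) (with multiplicity) are equal. Then for every u ∈ R^n, the sum over i of d_tr(u, v_i) is at least |Σ_i M_{i,σ(i)} − Σ_i M_{i,τ(i)}|. -/
noncomputable def dtr {n : ℕ} [NeZero n] (u v : Fin n → ℝ) : ℝ :=
  Finset.univ.sup' Finset.univ_nonempty
    (fun p : Fin n × Fin n => |u p.1 - u p.2 - v p.1 + v p.2|)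

lemma sum_comp_eq_of_mult {m n : ℕ} (σ τ : Fin m → Fin n)
    (hmult : ∀ j : Fin n,
      (Finset.univ.filter fun i => σ i = j).card =
        (Finset.univ.filter fun i => τ i = j).card)
    (u : Fin n → ℝ) : ∑ i, u (σ i) = ∑ i, u (τ i) := by
  rw [← Finset.sum_fiberwise Finset.univ σ (fun i => u (σ i)),
      ← Finset.sum_fiberwise Finset.univ τ (fun i => u (τ i))]
  refine Finset.sum_congr rfl fun j _ => ?_
  calc ∑ i ∈ Finset.univ.filter (fun i => σ i = j), u (σ i)
      = ∑ _i ∈ Finset.univ.filter (fun i => σ i = j), u j :=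
        Finset.sum_congr rfl (fun i hi => by rw [(Finset.mem_filter.mp hi).2])
    _ = (Finset.univ.filter (fun i => σ i = j)).card • u j := Finset.sum_const _
    _ = (Finset.univ.filter (fun i => τ i = j)).card • u j := by rw [hmult j]
    _ = ∑ _i ∈ Finset.univ.filter (fun i => τ i = j), u j := (Finset.sum_const _).symm
    _ = ∑ i ∈ Finset.univ.filter (fun i => τ i = j), u (τ i) :=
        Finset.sum_congr rfl (fun i hi => by rw [(Finset.mem_filter.mp hi).2])

theorem stmt5 {m n : ℕ} [NeZero n] (M : Fin m → Fin n → ℝ)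
    (σ τ : Fin m → Fin n)
    (hmult : ∀ j : Fin n,
      (Finset.univ.filter fun i => σ i = j).card =
        (Finset.univ.filter fun i => τ i = j).card)
    (u : Fin n → ℝ) :
    |∑ i, M i (σ i) - ∑ i, M i (τ i)| ≤ ∑ i, dtr u (M i) := by
  have key : ∀ i : Fin m,
      |u (σ i) - u (τ i) - M i (σ i) + M i (τ i)| ≤ dtr u (M i) := fun i =>
    Finset.le_sup' (fun p : Fin n × Fin n => |u p.1 - u p.2 - M i p.1 + M i p.2|)
      (Finset.mem_univ (σ i, τ i))
  have husum := sum_comp_eq_of_mult σ τ hmult u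
  calc |∑ i, M i (σ i) - ∑ i, M i (τ i)|
      = |∑ i, (u (σ i) - u (τ i) - M i (σ i) + M i (τ i))| := by
        rw [Finset.sum_add_distrib, Finset.sum_sub_distrib, Finset.sum_sub_distrib, husum]
        rw [abs_sub_comm]
        ring_nf
    _ ≤ ∑ i, |u (σ i) - u (τ i) - M i (σ i) + M i (τ i)| :=
        Finset.abs_sum_le_sum_abs _ _
    _ ≤ ∑ i, dtr u (M i) := Finset.sum_le_sum fun i _ => key i
end

section
/- If A and B are two m × n matrices (with entries from any set) having the same multiset of entries, then there exist m × n matrices A' and B' such that: (i) for each row index i, the i-th row of A' and the i-th row of B' have the same multiset of entries; and (ii) for each column index j, the j-th column of A' has the same multiset of entries as the j-th column of A, and the j-th column of B' has the same multiset of entries as the j-th column of B. -/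
/-!
Let `f j` and `g j` be the multisets of entries of the `j`-th columns of `A` and `B`; they all
have `m` elements and `∑ j, f j = ∑ j, g j`. For a set `S` of columns, the entries of the `f j`,
`j ∈ S`, can only be found in the columns `g k` sharing an entry with some such `f j`, so
counting entries gives Hall's condition for the relation "`f j` and `g k` share an entry".
A perfect matching `σ` then yields one entry `x j ∈ f j ∩ g (σ j)` per column, and the tuples
`x` and `x ∘ σ⁻¹` have the same multiset of entries. They form the first rows of `A'` and `B'`;
deleting them from the columns leaves the same situation with `m - 1` rows.
-/

open Finset

section

variable {ι α : Type*}

theorem Multiset.le_of_le_add_of_disjoint {s t u : Multiset α} (h : s ≤ t + u)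
    (hd : Disjoint s u) : s ≤ t := by
  classical
  rw [Multiset.le_iff_count] at h ⊢
  intro a
  by_cases ha : a ∈ s
  · simpa [Multiset.count_eq_zero_of_notMem (Multiset.disjoint_left.1 hd ha)] using h a
  · simp [Multiset.count_eq_zero_of_notMem ha]

theorem Finset.val_map_eq_sum_singleton (s : Finset ι) (F : ι → α) :
    s.val.map F = ∑ i ∈ s, {F i} := by
  rw [← Multiset.sum_map_singleton (s.val.map F), Multiset.map_map]
  rfl

theorem Finset.univ_val_map_prod_eq_sum {κ : Type*} [Fintype ι] [Fintype κ] (M : ι → κ → α) :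
    (univ.val.map fun p : ι × κ => M p.1 p.2) = ∑ j, univ.val.map fun i => M i j := by
  simp_rw [val_map_eq_sum_singleton, ← univ_product_univ, sum_product_right]

theorem Fin.univ_val_map_succ {m : ℕ} (F : Fin (m + 1) → α) :
    univ.val.map F = F 0 ::ₘ univ.val.map fun i : Fin m => F i.succ := by
  simp_rw [val_map_eq_sum_singleton, Fin.sum_univ_succ, Multiset.singleton_add]

theorem Finset.sum_eq_val_map_add_sum_erase [Fintype ι] [DecidableEq α] {f : ι → Multiset α}
    {x : ι → α} (hx : ∀ i, x i ∈ f i) :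
    ∑ i, f i = univ.val.map x + ∑ i, (f i).erase (x i) := by
  calc ∑ i, f i = ∑ i, ({x i} + (f i).erase (x i)) :=
        sum_congr rfl fun i _ => by rw [Multiset.singleton_add, Multiset.cons_erase (hx i)]
    _ = univ.val.map x + ∑ i, (f i).erase (x i) := by
        rw [sum_add_distrib, val_map_eq_sum_singleton]

section SameSizeFamilies

variable [Fintype ι] {f g : ι → Multiset α} {m : ℕ}

theorem exists_equiv_forall_exists_mem_of_sum_eq (hm : 0 < m)
    (hf : ∀ i, Multiset.card (f i) = m) (hg : ∀ i, Multiset.card (g i) = m)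
    (hsum : ∑ i, f i = ∑ i, g i) :
    ∃ σ : ι ≃ ι, ∀ i, ∃ a ∈ f i, a ∈ g (σ i) := by
  classical
  let r : ι → Finset ι := fun j => univ.filter fun k => ∃ a ∈ f j, a ∈ g k
  have hall : ∀ S : Finset ι, #S ≤ #(S.biUnion r) := by
    intro S
    set T := S.biUnion r
    have hdisj : Disjoint (∑ j ∈ S, f j) (∑ k ∈ Tᶜ, g k) := by
      refine Multiset.disjoint_left.2 fun {a} haS haT => ?_
      obtain ⟨j, hj, haj⟩ := Multiset.mem_sum.1 haS
      obtain ⟨k, hk, hak⟩ := Multiset.mem_sum.1 haT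
      exact mem_compl.1 hk (mem_biUnion.2 ⟨j, hj, mem_filter.2 ⟨mem_univ k, a, haj, hak⟩⟩)
    have hle : ∑ j ∈ S, f j ≤ ∑ k ∈ T, g k := by
      refine Multiset.le_of_le_add_of_disjoint ?_ hdisj
      rw [sum_add_sum_compl, ← hsum]
      exact sum_le_sum_of_subset (subset_univ S)
    have hcard := Multiset.card_le_card hle
    simp only [Multiset.card_sum, hf, hg, sum_const, smul_eq_mul] at hcard
    exact Nat.le_of_mul_le_mul_right hcard hm
  obtain ⟨σ, hσ, hσr⟩ := (all_card_le_biUnion_card_iff_exists_injective r).1 hall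
  exact ⟨Equiv.ofBijective σ (Finite.injective_iff_bijective.1 hσ),
    fun i => by simpa [r] using hσr i⟩

theorem exists_transversals_val_map_eq_of_sum_eq (hm : 0 < m)
    (hf : ∀ i, Multiset.card (f i) = m) (hg : ∀ i, Multiset.card (g i) = m)
    (hsum : ∑ i, f i = ∑ i, g i) :
    ∃ s t : ι → α, (∀ i, s i ∈ f i) ∧ (∀ i, t i ∈ g i) ∧ univ.val.map s = univ.val.map t := by
  obtain ⟨σ, hσ⟩ := exists_equiv_forall_exists_mem_of_sum_eq hm hf hg hsum
  choose x hxf hxg using hσ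
  refine ⟨x, x ∘ σ.symm, hxf, fun k => by simpa using hxg (σ.symm k), ?_⟩
  rw [← Multiset.map_map, Multiset.map_univ_val_equiv]

theorem exists_rows_val_map_eq_of_sum_columns_eq (hf : ∀ i, Multiset.card (f i) = m)
    (hg : ∀ i, Multiset.card (g i) = m) (hsum : ∑ i, f i = ∑ i, g i) :
    ∃ A' B' : Fin m → ι → α,
      (∀ r, univ.val.map (A' r) = univ.val.map (B' r)) ∧
      (∀ j, univ.val.map (fun r => A' r j) = f j) ∧
      (∀ j, univ.val.map (fun r => B' r j) = g j) := by
  classical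
  induction m generalizing f g with
  | zero =>
    refine ⟨finZeroElim, finZeroElim, finZeroElim, fun j => ?_, fun j => ?_⟩
    · simp [Multiset.card_eq_zero.1 (hf j)]
    · simp [Multiset.card_eq_zero.1 (hg j)]
  | succ m ih =>
    obtain ⟨s, t, hs, ht, hst⟩ :=
      exists_transversals_val_map_eq_of_sum_eq m.succ_pos hf hg hsum
    have hsum' : ∑ j, (f j).erase (s j) = ∑ j, (g j).erase (t j) := by
      rw [sum_eq_val_map_add_sum_erase hs, sum_eq_val_map_add_sum_erase ht, hst] at hsum
      exact add_left_cancel hsum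
    obtain ⟨A₀, B₀, hrow, hcolA, hcolB⟩ := ih
      (fun j => by simp [Multiset.card_erase_of_mem (hs j), hf])
      (fun j => by simp [Multiset.card_erase_of_mem (ht j), hg]) hsum'
    refine ⟨Fin.cons s A₀, Fin.cons t B₀, Fin.cases hst hrow, fun j => ?_, fun j => ?_⟩
    · rw [Fin.univ_val_map_succ]
      simp only [Fin.cons_zero, Fin.cons_succ, hcolA, Multiset.cons_erase (hs j)]
    · rw [Fin.univ_val_map_succ]
      simp only [Fin.cons_zero, Fin.cons_succ, hcolB, Multiset.cons_erase (ht j)]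

end SameSizeFamilies

end

theorem stmt6 {m n : ℕ} {α : Type*} (A B : Fin m → Fin n → α)
    (h : (Finset.univ.val.map fun p : Fin m × Fin n => A p.1 p.2) =
         (Finset.univ.val.map fun p : Fin m × Fin n => B p.1 p.2)) :
    ∃ A' B' : Fin m → Fin n → α,
      (∀ i : Fin m,
        (Finset.univ.val.map fun j => A' i j) =
          (Finset.univ.val.map fun j => B' i j)) ∧
      (∀ j : Fin n,
        (Finset.univ.val.map fun i => A' i j) =
          (Finset.univ.val.map fun i => A i j)) ∧
      (∀ j : Fin n,
        (Finset.univ.val.map fun i => B' i j) =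
          (Finset.univ.val.map fun i => B i j)) := by
  rw [univ_val_map_prod_eq_sum, univ_val_map_prod_eq_sum] at h
  exact exists_rows_val_map_eq_of_sum_columns_eq (by simp) (by simp) h
end

section
/- Let M be an m × n real matrix with rows v_1, ..., v_m. Then the minimal value over u ∈ R^n of Σ_{i=1}^m d_tr(u, v_i) exists and equals the maximum over pairs of functions σ, τ : [m] → [n] with equal value-multisets of |Σ_i M_{i,σ(i)} − Σ_i M_{i,τ(i)}|. -/
open Finset

set_option linter.unusedSectionVars false

namespace Stmt7

variable {m n : ℕ} [NeZero n]

lemma abs_le_dtr (u v : Fin n → ℝ) (j k : Fin n) :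
    |u j - u k - v j + v k| ≤ dtr u v :=
  Finset.le_sup' (fun p : Fin n × Fin n => |u p.1 - u p.2 - v p.1 + v p.2|)
    (Finset.mem_univ (j, k))

lemma dtr_le {u v : Fin n → ℝ} {a b : ℝ} (h1 : ∀ j, u j - v j ≤ a)
    (h2 : ∀ j, b ≤ u j - v j) : dtr u v ≤ a - b := by
  apply Finset.sup'_le
  rintro ⟨j, k⟩ -
  rw [abs_le]
  constructor
  · have h := h1 k; have h' := h2 j; simp only at h h' ⊢; linarith
  · have h := h1 j; have h' := h2 k; simp only at h h' ⊢; linarith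

lemma dtr_eq_of {u v : Fin n → ℝ} {a b : Fin n}
    (h1 : ∀ j, u j - v j ≤ u a - v a) (h2 : ∀ j, u b - v b ≤ u j - v j) :
    dtr u v = (u a - v a) - (u b - v b) := by
  refine le_antisymm (dtr_le h1 h2) ?_
  have h := (le_abs_self _).trans (abs_le_dtr u v a b)
  linarith

variable (M : Fin m → Fin n → ℝ) (u₀ : Fin n → ℝ)

noncomputable def gg (i : Fin m) : ℝ :=
  Finset.univ.sup' Finset.univ_nonempty (fun j => u₀ j - M i j)

noncomputable def hh (i : Fin m) : ℝ :=
  Finset.univ.inf' Finset.univ_nonempty (fun j => u₀ j - M i j)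

open scoped Classical in
noncomputable def AA (i : Fin m) : Finset (Fin n) :=
  univ.filter fun j => u₀ j - M i j = gg M u₀ i

open scoped Classical in
noncomputable def BB (i : Fin m) : Finset (Fin n) :=
  univ.filter fun j => u₀ j - M i j = hh M u₀ i

lemma le_gg (i : Fin m) (j : Fin n) : u₀ j - M i j ≤ gg M u₀ i := by
  unfold gg; exact Finset.le_sup' (fun j => u₀ j - M i j) (mem_univ j)

lemma hh_le (i : Fin m) (j : Fin n) : hh M u₀ i ≤ u₀ j - M i j := by
  unfold hh; exact Finset.inf'_le (fun j => u₀ j - M i j) (mem_univ j)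

lemma mem_AA {i : Fin m} {j : Fin n} : j ∈ AA M u₀ i ↔ u₀ j - M i j = gg M u₀ i := by
  simp [AA]

lemma mem_BB {i : Fin m} {j : Fin n} : j ∈ BB M u₀ i ↔ u₀ j - M i j = hh M u₀ i := by
  simp [BB]

lemma AA_nonempty (i : Fin m) : (AA M u₀ i).Nonempty := by
  obtain ⟨j, -, hj⟩ := Finset.exists_mem_eq_sup' (Finset.univ_nonempty)
    (fun j => u₀ j - M i j)
  exact ⟨j, (mem_AA M u₀).mpr hj.symm⟩

lemma BB_nonempty (i : Fin m) : (BB M u₀ i).Nonempty := by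
  obtain ⟨j, -, hj⟩ := Finset.exists_mem_eq_inf' (Finset.univ_nonempty)
    (fun j => u₀ j - M i j)
  exact ⟨j, (mem_BB M u₀).mpr hj.symm⟩

lemma dtr_u₀ (i : Fin m) : dtr u₀ (M i) = gg M u₀ i - hh M u₀ i := by
  obtain ⟨a, ha⟩ := AA_nonempty M u₀ i
  obtain ⟨b, hb⟩ := BB_nonempty M u₀ i
  rw [mem_AA] at ha; rw [mem_BB] at hb
  rw [dtr_eq_of (a := a) (b := b) (fun j => ha ▸ le_gg M u₀ i j)
    (fun j => hb ▸ hh_le M u₀ i j), ha, hb]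

lemma key [NeZero m] (hmin : ∀ u, ∑ i, dtr u₀ (M i) ≤ ∑ i, dtr u (M i))
    (S : Finset (Fin n)) :
    (univ.filter fun i => AA M u₀ i ⊆ S).card ≤
      (univ.filter fun i => (BB M u₀ i ∩ S).Nonempty).card := by
  classical
  set γ : Fin m → ℝ := fun i =>
    univ.inf' Finset.univ_nonempty
      (fun j => if u₀ j - M i j < gg M u₀ i then gg M u₀ i - (u₀ j - M i j) else 1) with hγ
  set δ : Fin m → ℝ := fun i =>
    univ.inf' Finset.univ_nonempty
      (fun j => if hh M u₀ i < u₀ j - M i j then (u₀ j - M i j) - hh M u₀ i else 1) with hδ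
  set t : ℝ := univ.inf' Finset.univ_nonempty (fun i => min (γ i) (δ i)) with hts
  have ht : 0 < t := by
    rw [hts, Finset.lt_inf'_iff]
    intro i _
    refine lt_min ?_ ?_
    · rw [hγ, Finset.lt_inf'_iff]
      intro j _
      split_ifs with hlt
      · linarith
      · norm_num
    · rw [hδ, Finset.lt_inf'_iff]
      intro j _
      split_ifs with hlt
      · linarith
      · norm_num
  have htγ : ∀ i, t ≤ γ i := fun i =>
    le_trans (Finset.inf'_le _ (mem_univ i)) (min_le_left _ _)
  have htδ : ∀ i, t ≤ δ i := fun i =>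
    le_trans (Finset.inf'_le _ (mem_univ i)) (min_le_right _ _)
  set u' : Fin n → ℝ := fun j => u₀ j - (if j ∈ S then t else 0) with hu'
  have hper : ∀ i, dtr u' (M i) ≤ dtr u₀ (M i)
      + (t * (if (BB M u₀ i ∩ S).Nonempty then (1:ℝ) else 0)
         - t * (if AA M u₀ i ⊆ S then (1:ℝ) else 0)) := by
    intro i
    have hgs : ∀ j, u' j - M i j ≤ gg M u₀ i - t * (if AA M u₀ i ⊆ S then (1:ℝ) else 0) := by
      intro j
      by_cases hA : AA M u₀ i ⊆ S
      · simp only [hA, if_true, mul_one]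
        by_cases hjS : j ∈ S
        · have := le_gg M u₀ i j
          simp only [hu', hjS, if_true]
          linarith
        · have hjA : j ∉ AA M u₀ i := fun h => hjS (hA h)
          have hlt : u₀ j - M i j < gg M u₀ i :=
            lt_of_le_of_ne (le_gg M u₀ i j) (by simpa [mem_AA] using hjA)
          have h1 : γ i ≤ gg M u₀ i - (u₀ j - M i j) := by
            have h2 := Finset.inf'_le
              (fun j => if u₀ j - M i j < gg M u₀ i then gg M u₀ i - (u₀ j - M i j) else 1)
              (mem_univ j)
            rw [if_pos hlt] at h2
            exact h2
          have := htγ i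
          simp only [hu', hjS, if_false]
          linarith
      · simp only [hA, if_false, mul_zero, sub_zero]
        have := le_gg M u₀ i j
        by_cases hjS : j ∈ S <;> simp only [hu', hjS, if_true, if_false] <;> linarith
    have hhs : ∀ j, hh M u₀ i - t * (if (BB M u₀ i ∩ S).Nonempty then (1:ℝ) else 0)
        ≤ u' j - M i j := by
      intro j
      by_cases hB : (BB M u₀ i ∩ S).Nonempty
      · simp only [hB, if_true, mul_one]
        have := hh_le M u₀ i j
        by_cases hjS : j ∈ S <;> simp only [hu', hjS, if_true, if_false] <;> linarith
      · simp only [hB, if_false, mul_zero, sub_zero]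
        by_cases hjS : j ∈ S
        · have hjB : j ∉ BB M u₀ i := by
            intro h
            exact hB ⟨j, Finset.mem_inter.mpr ⟨h, hjS⟩⟩
          have hlt : hh M u₀ i < u₀ j - M i j :=
            lt_of_le_of_ne (hh_le M u₀ i j) (by simpa [mem_BB, eq_comm] using hjB)
          have h1 : δ i ≤ (u₀ j - M i j) - hh M u₀ i := by
            have h2 := Finset.inf'_le
              (fun j => if hh M u₀ i < u₀ j - M i j then (u₀ j - M i j) - hh M u₀ i else 1)
              (mem_univ j)
            rw [if_pos hlt] at h2
            exact h2
          have := htδ i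
          simp only [hu', hjS, if_true]
          linarith
        · have := hh_le M u₀ i j
          simp only [hu', hjS, if_false]
          linarith
    have hd := dtr_le hgs hhs
    rw [dtr_u₀ M u₀ i]
    linarith
  have hsum := Finset.sum_le_sum (fun i (_ : i ∈ univ) => hper i)
  simp only [Finset.sum_add_distrib, Finset.sum_sub_distrib, ← Finset.mul_sum] at hsum
  have hmin' := hmin u'
  have h0 : 0 ≤ t * ((∑ i, (if (BB M u₀ i ∩ S).Nonempty then (1:ℝ) else 0))
      - ∑ i, (if AA M u₀ i ⊆ S then (1:ℝ) else 0)) := by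
    rw [mul_sub]; linarith
  have h1 : (∑ i, (if AA M u₀ i ⊆ S then (1:ℝ) else 0))
      ≤ ∑ i, (if (BB M u₀ i ∩ S).Nonempty then (1:ℝ) else 0) := by
    nlinarith
  rw [Finset.sum_boole, Finset.sum_boole] at h1
  exact_mod_cast h1

lemma sum_comp_eq (u : Fin n → ℝ) (σ τ : Fin m → Fin n)
    (h : ∀ j, (univ.filter fun i => σ i = j).card = (univ.filter fun i => τ i = j).card) :
    ∑ i, u (σ i) = ∑ i, u (τ i) := by
  rw [← Finset.sum_fiberwise' univ σ u, ← Finset.sum_fiberwise' univ τ u]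
  refine Finset.sum_congr rfl fun j _ => ?_
  rw [Finset.sum_const, Finset.sum_const, h j]

lemma one_side (M : Fin m → Fin n → ℝ) (u : Fin n → ℝ) (σ τ : Fin m → Fin n)
    (h : ∀ j, (univ.filter fun i => σ i = j).card = (univ.filter fun i => τ i = j).card) :
    ∑ i, M i (σ i) - ∑ i, M i (τ i) ≤ ∑ i, dtr u (M i) := by
  have key : ∀ i : Fin m, M i (σ i) - M i (τ i) - (u (σ i) - u (τ i)) ≤ dtr u (M i) := by
    intro i
    have h1 := (le_abs_self _).trans (abs_le_dtr u (M i) (τ i) (σ i))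
    linarith
  have hs := Finset.sum_le_sum (fun i (_ : i ∈ univ) => key i)
  have hsum := sum_comp_eq u σ τ h
  simp only [Finset.sum_sub_distrib] at hs
  linarith

lemma le_sum_dtr (M : Fin m → Fin n → ℝ) (u : Fin n → ℝ) (σ τ : Fin m → Fin n)
    (h : ∀ j, (univ.filter fun i => σ i = j).card = (univ.filter fun i => τ i = j).card) :
    |∑ i, M i (σ i) - ∑ i, M i (τ i)| ≤ ∑ i, dtr u (M i) := by
  rw [abs_sub_le_iff]
  exact ⟨one_side M u σ τ h, one_side M u τ σ fun j => (h j).symm⟩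

lemma exists_sigma_tau [NeZero m]
    (hmin : ∀ u, ∑ i, dtr u₀ (M i) ≤ ∑ i, dtr u (M i)) :
    ∃ σ τ : Fin m → Fin n,
      (∀ j, (univ.filter fun i => σ i = j).card = (univ.filter fun i => τ i = j).card) ∧
      ∑ i, dtr u₀ (M i) = ∑ i, M i (τ i) - ∑ i, M i (σ i) := by
  classical
  have hall : ∀ s : Finset (Fin m), s.card ≤ (s.biUnion fun i =>
      univ.filter fun i' : Fin m => (AA M u₀ i ∩ BB M u₀ i').Nonempty).card := by
    intro s
    calc s.card ≤ (univ.filter fun i => AA M u₀ i ⊆ s.biUnion (AA M u₀)).card := by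
          apply Finset.card_le_card
          intro i hi
          simp only [mem_filter, mem_univ, true_and]
          exact Finset.subset_biUnion_of_mem _ hi
      _ ≤ (univ.filter fun i => (BB M u₀ i ∩ s.biUnion (AA M u₀)).Nonempty).card :=
          key M u₀ hmin _
      _ ≤ (s.biUnion fun i => univ.filter fun i' : Fin m =>
            (AA M u₀ i ∩ BB M u₀ i').Nonempty).card := by
          apply Finset.card_le_card
          intro i' hi'
          simp only [mem_filter, mem_univ, true_and] at hi'
          obtain ⟨j, hj⟩ := hi'
          rw [Finset.mem_inter, Finset.mem_biUnion] at hj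
          obtain ⟨hjB, i, his, hjA⟩ := hj
          rw [Finset.mem_biUnion]
          exact ⟨i, his, by
            simp only [mem_filter, mem_univ, true_and]
            exact ⟨j, Finset.mem_inter.mpr ⟨hjA, hjB⟩⟩⟩
  obtain ⟨f, hfinj, hf⟩ := (Finset.all_card_le_biUnion_card_iff_exists_injective
      (fun i : Fin m => univ.filter fun i' : Fin m =>
        (AA M u₀ i ∩ BB M u₀ i').Nonempty)).mp hall
  have hfbij : Function.Bijective f := Finite.injective_iff_bijective.mp hfinj
  set e : Fin m ≃ Fin m := Equiv.ofBijective f hfbij with he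
  have hef : ∀ i, e i = f i := fun i => rfl
  have hne : ∀ i, (AA M u₀ i ∩ BB M u₀ (f i)).Nonempty := by
    intro i
    have := hf i
    simpa only [mem_filter, mem_univ, true_and] using this
  choose jj hjj using hne
  have hjjA : ∀ i, jj i ∈ AA M u₀ i := fun i => (Finset.mem_inter.mp (hjj i)).1
  have hjjB : ∀ i, jj i ∈ BB M u₀ (f i) := fun i => (Finset.mem_inter.mp (hjj i)).2
  set σ : Fin m → Fin n := jj with hσ
  set τ : Fin m → Fin n := fun i' => jj (e.symm i') with hτ
  have hsymm : ∀ i, e.symm (f i) = i := by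
    intro i; rw [← hef]; exact e.symm_apply_apply i
  have hfsymm : ∀ i', f (e.symm i') = i' := by
    intro i'; rw [← hef]; exact e.apply_symm_apply i'
  have hcards : ∀ j, (univ.filter fun i => σ i = j).card =
      (univ.filter fun i => τ i = j).card := by
    intro c
    apply Finset.card_bij' (fun i _ => f i) (fun i' _ => e.symm i')
    · intro i hi
      simp only [mem_filter, mem_univ, true_and] at hi ⊢
      rw [hτ]
      simpa [hsymm i] using hi
    · intro i' hi'
      simp only [mem_filter, mem_univ, true_and] at hi' ⊢
      rw [hτ] at hi'
      exact hi'
    · intro i _; exact hsymm i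
    · intro i' _; exact hfsymm i'
  refine ⟨σ, τ, hcards, ?_⟩
  have hterm : ∀ i, dtr u₀ (M i) =
      (u₀ (σ i) - M i (σ i)) - (u₀ (τ i) - M i (τ i)) := by
    intro i
    have hA : u₀ (σ i) - M i (σ i) = gg M u₀ i := (mem_AA M u₀).mp (hjjA i)
    have hB : τ i ∈ BB M u₀ i := by
      have := hjjB (e.symm i)
      rwa [hfsymm i] at this
    have hB' : u₀ (τ i) - M i (τ i) = hh M u₀ i := (mem_BB M u₀).mp hB
    exact dtr_eq_of (fun j => hA ▸ le_gg M u₀ i j) (fun j => hB' ▸ hh_le M u₀ i j)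
  rw [Finset.sum_congr rfl fun i _ => hterm i]
  have hu := sum_comp_eq u₀ σ τ hcards
  simp only [Finset.sum_sub_distrib] at *
  linarith

lemma dtr_sub_const (u : Fin n → ℝ) (v : Fin n → ℝ) (c : ℝ) :
    dtr (fun j => u j - c) v = dtr u v := by
  unfold dtr
  congr 1
  funext p
  ring_nf

lemma dtr_nonneg' (u v : Fin n → ℝ) : 0 ≤ dtr u v :=
  (abs_nonneg _).trans (abs_le_dtr u v 0 0)

lemma exists_min (M : Fin m → Fin n → ℝ) :
    ∃ u₀ : Fin n → ℝ, ∀ u, ∑ i, dtr u₀ (M i) ≤ ∑ i, dtr u (M i) := by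
  rcases Nat.eq_zero_or_pos m with hm | hm
  · subst hm
    exact ⟨0, fun u => by simp⟩
  haveI : NeZero m := ⟨hm.ne'⟩
  set i0 : Fin m := ⟨0, hm⟩ with hi0
  set F : (Fin n → ℝ) → ℝ := fun u => ∑ i, dtr u (M i) with hF
  have hFcont : Continuous F := by
    apply continuous_finset_sum
    intro i _
    unfold dtr
    apply Continuous.finset_sup'_apply
    intro p _
    fun_prop
  have hFtrans : ∀ (u : Fin n → ℝ) (c : ℝ), F (fun j => u j - c) = F u := by
    intro u c
    exact Finset.sum_congr rfl fun i _ => dtr_sub_const u (M i) c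
  have hF0 : 0 ≤ F 0 := Finset.sum_nonneg fun i _ => dtr_nonneg' _ _
  set C : ℝ := ∑ j, |M i0 j - M i0 0| with hC
  have hC0 : 0 ≤ C := Finset.sum_nonneg fun j _ => abs_nonneg _
  set R : ℝ := F 0 + C + 1 with hR
  have hR0 : 0 ≤ R := by linarith
  set K : Set (Fin n → ℝ) :=
    (Set.univ.pi fun _ : Fin n => Set.Icc (-R) R) ∩ {u | u 0 = 0} with hK
  have hKc : IsCompact K :=
    (isCompact_univ_pi fun _ => isCompact_Icc).inter_right
      (isClosed_eq (continuous_apply 0) continuous_const)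
  have hK0 : (0 : Fin n → ℝ) ∈ K := by
    constructor
    · intro j _
      simp only [Pi.zero_apply, Set.mem_Icc]
      constructor <;> linarith
    · simp
  obtain ⟨u₀, hu₀K, hu₀min⟩ := hKc.exists_isMinOn ⟨0, hK0⟩ hFcont.continuousOn
  rw [isMinOn_iff] at hu₀min
  refine ⟨u₀, fun u => ?_⟩
  set u' : Fin n → ℝ := fun j => u j - u 0 with hu'
  have hFu' : F u' = F u := hFtrans u (u 0)
  have hu'0 : u' 0 = 0 := sub_self _
  show F u₀ ≤ F u
  by_cases hb : ∀ j, |u' j| ≤ R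
  · have hmem : u' ∈ K := by
      constructor
      · intro j _
        simpa [Set.mem_Icc, ← abs_le] using hb j
      · exact hu'0
    rw [← hFu']
    exact hu₀min u' hmem
  · push_neg at hb
    obtain ⟨j, hj⟩ := hb
    have h1 := abs_le_dtr u' (M i0) j 0
    have h2 : dtr u' (M i0) ≤ F u' :=
      Finset.single_le_sum (fun i (_ : i ∈ univ) => dtr_nonneg' u' (M i)) (mem_univ i0)
    have h3 : |M i0 j - M i0 0| ≤ C := by
      rw [hC]
      exact Finset.single_le_sum (f := fun k => |M i0 k - M i0 0|)
        (fun k _ => abs_nonneg _) (mem_univ j)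
    have h4 : |u' j| - |M i0 j - M i0 0| ≤ |u' j - u' 0 - M i0 j + M i0 0| := by
      have he : u' j - u' 0 - M i0 j + M i0 0 = u' j - (M i0 j - M i0 0) := by
        rw [hu'0]; ring
      rw [he]
      exact abs_sub_abs_le_abs_sub _ _
    have h5 : F u₀ ≤ F 0 := hu₀min 0 hK0
    rw [← hFu']
    linarith

end Stmt7

theorem stmt7 {m n : ℕ} [NeZero n] (M : Fin m → Fin n → ℝ) :
    ∃ u₀ : Fin n → ℝ,
      (∀ u : Fin n → ℝ, ∑ i, dtr u₀ (M i) ≤ ∑ i, dtr u (M i)) ∧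
      IsGreatest
        {x : ℝ | ∃ σ τ : Fin m → Fin n,
          (∀ j : Fin n,
            (Finset.univ.filter fun i => σ i = j).card =
              (Finset.univ.filter fun i => τ i = j).card) ∧
          x = |∑ i, M i (σ i) - ∑ i, M i (τ i)|}
        (∑ i, dtr u₀ (M i)) := by
  classical
  obtain ⟨u₀, hmin⟩ := Stmt7.exists_min M
  refine ⟨u₀, hmin, ?_, ?_⟩
  · -- membership
    rcases Nat.eq_zero_or_pos m with hm | hm
    · subst hm
      refine ⟨fun i => i.elim0, fun i => i.elim0, by simp, by simp⟩
    · haveI : NeZero m := ⟨hm.ne'⟩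
      obtain ⟨σ, τ, hcards, hval⟩ := Stmt7.exists_sigma_tau M u₀ hmin
      refine ⟨τ, σ, fun j => (hcards j).symm, ?_⟩
      have hnn : 0 ≤ ∑ i, dtr u₀ (M i) :=
        Finset.sum_nonneg fun i _ => Stmt7.dtr_nonneg' u₀ (M i)
      rw [hval] at hnn ⊢
      rw [abs_of_nonneg hnn]
  · rintro x ⟨σ, τ, hcards, rfl⟩
    exact Stmt7.le_sum_dtr M u₀ σ τ hcards
end

section
/- The set of tropical Fermat-Weber points of the three points (0,0,0), (0,3,1), (0,2,5) in R^3 / R·1 is exactly the triangle with vertices (0,1,1), (0,2,1), (0,2,2); equivalently, a point u with u_1 = 0 is a Fermat-Weber point of these three points if and only if (u_2, u_3) is in the convex hull of {(1,1),(2,1),(2,2)}. -/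
section TropicalDistance

variable {n : ℕ} [NeZero n]

lemma abs_sub_le_dtr (u v : Fin n → ℝ) (i j : Fin n) :
    |u i - u j - v i + v j| ≤ dtr u v :=
  Finset.le_sup' (fun p : Fin n × Fin n => |u p.1 - u p.2 - v p.1 + v p.2|)
    (Finset.mem_univ (i, j))

lemma dtr_le {u v : Fin n → ℝ} {c : ℝ}
    (h : ∀ i j : Fin n, |u i - u j - v i + v j| ≤ c) : dtr u v ≤ c :=
  Finset.sup'_le _ _ fun p _ => h p.1 p.2

end TropicalDistance

noncomputable def fermatWeberCost (w : Fin 3 → ℝ) : ℝ :=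
  dtr w ![0, 0, 0] + dtr w ![0, 3, 1] + dtr w ![0, 2, 5]

lemma seven_le_fermatWeberCost (w : Fin 3 → ℝ) : 7 ≤ fermatWeberCost w := by
  have h₁ := (le_abs_self _).trans (abs_sub_le_dtr w ![0, 0, 0] 1 0)
  have h₂ := (neg_le_abs _).trans (abs_sub_le_dtr w ![0, 3, 1] 1 2)
  have h₃ := (neg_le_abs _).trans (abs_sub_le_dtr w ![0, 2, 5] 2 0)
  simp only [Matrix.cons_val_zero, Matrix.cons_val_one, Matrix.cons_val] at h₁ h₂ h₃
  unfold fermatWeberCost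
  linarith

lemma fermatWeberCost_le_seven {u : Fin 3 → ℝ} (h0 : u 0 = 0)
    (h₁ : 1 ≤ u 2) (h₂ : u 2 ≤ u 1) (h₃ : u 1 ≤ 2) : fermatWeberCost u ≤ 7 := by
  have e₁ : dtr u ![0, 0, 0] ≤ u 1 := by
    refine dtr_le fun i j => abs_le.2 ⟨?_, ?_⟩ <;> fin_cases i <;> fin_cases j <;>
      simp [h0] <;> linarith
  have e₂ : dtr u ![0, 3, 1] ≤ 2 - u 1 + u 2 := by
    refine dtr_le fun i j => abs_le.2 ⟨?_, ?_⟩ <;> fin_cases i <;> fin_cases j <;>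
      simp [h0] <;> linarith
  have e₃ : dtr u ![0, 2, 5] ≤ 5 - u 2 := by
    refine dtr_le fun i j => abs_le.2 ⟨?_, ?_⟩ <;> fin_cases i <;> fin_cases j <;>
      simp [h0] <;> linarith
  unfold fermatWeberCost
  linarith

lemma le_of_fermatWeberCost_le_seven {u : Fin 3 → ℝ} (h0 : u 0 = 0)
    (h : fermatWeberCost u ≤ 7) : 1 ≤ u 2 ∧ u 2 ≤ u 1 ∧ u 1 ≤ 2 := by
  have a₁ := (le_abs_self _).trans (abs_sub_le_dtr u ![0, 0, 0] 1 0)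
  have a₂ := (le_abs_self _).trans (abs_sub_le_dtr u ![0, 0, 0] 2 0)
  have b₁ := (neg_le_abs _).trans (abs_sub_le_dtr u ![0, 3, 1] 1 0)
  have b₂ := (neg_le_abs _).trans (abs_sub_le_dtr u ![0, 3, 1] 1 2)
  have c₁ := (neg_le_abs _).trans (abs_sub_le_dtr u ![0, 2, 5] 2 0)
  have c₂ := (le_abs_self _).trans (abs_sub_le_dtr u ![0, 2, 5] 1 2)
  simp only [Matrix.cons_val_zero, Matrix.cons_val_one, Matrix.cons_val] at a₁ a₂ b₁ b₂ c₁ c₂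
  unfold fermatWeberCost at h
  refine ⟨?_, ?_, ?_⟩ <;> linarith

lemma mem_convexHull_triangle_iff (x y : ℝ) :
    (x, y) ∈ convexHull ℝ ({(1, 1), (2, 1), (2, 2)} : Set (ℝ × ℝ)) ↔
      1 ≤ y ∧ y ≤ x ∧ x ≤ 2 := by
  constructor
  · have hconv : Convex ℝ {p : ℝ × ℝ | 1 ≤ p.2 ∧ p.2 ≤ p.1 ∧ p.1 ≤ 2} := by
      rintro p ⟨hp₁, hp₂, hp₃⟩ q ⟨hq₁, hq₂, hq₃⟩ a b ha hb hab
      simp only [Set.mem_ofPred_eq, Prod.fst_add, Prod.snd_add, Prod.smul_fst, Prod.smul_snd,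
        smul_eq_mul]
      refine ⟨?_, ?_, ?_⟩ <;> nlinarith
    refine fun h => convexHull_min ?_ hconv h
    rintro p (rfl | rfl | rfl) <;> norm_num
  · rintro ⟨h₁, h₂, h₃⟩
    have hmem := (convex_convexHull ℝ ({(1, 1), (2, 1), (2, 2)} : Set (ℝ × ℝ))).sum_mem
      (t := Finset.univ) (w := ![2 - x, x - y, y - 1]) (z := ![(1, 1), (2, 1), (2, 2)])
      (by intro i _; fin_cases i <;> simp <;> linarith) (by simp [Fin.sum_univ_three]; norm_num)
      (by intro i _; apply subset_convexHull; fin_cases i <;> simp)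
    convert hmem using 1
    ext <;> simp [Fin.sum_univ_three] <;> ring

lemma fermatWeberCost_le_seven_iff {u : Fin 3 → ℝ} (h0 : u 0 = 0) :
    fermatWeberCost u ≤ 7 ↔ 1 ≤ u 2 ∧ u 2 ≤ u 1 ∧ u 1 ≤ 2 :=
  ⟨le_of_fermatWeberCost_le_seven h0, fun ⟨h₁, h₂, h₃⟩ => fermatWeberCost_le_seven h0 h₁ h₂ h₃⟩

lemma forall_fermatWeberCost_le_iff (u : Fin 3 → ℝ) :
    (∀ w, fermatWeberCost u ≤ fermatWeberCost w) ↔ fermatWeberCost u ≤ 7 :=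
  ⟨fun h => (h ![0, 2, 1]).trans <|
      fermatWeberCost_le_seven rfl (by simp) (by simp) (by norm_num),
    fun h w => h.trans (seven_le_fermatWeberCost w)⟩

theorem stmt10 (u : Fin 3 → ℝ) (h0 : u 0 = 0) :
    (∀ w : Fin 3 → ℝ,
        dtr u ![0, 0, 0] + dtr u ![0, 3, 1] + dtr u ![0, 2, 5] ≤
          dtr w ![0, 0, 0] + dtr w ![0, 3, 1] + dtr w ![0, 2, 5]) ↔
      (u 1, u 2) ∈
        convexHull ℝ ({(1, 1), (2, 1), (2, 2)} : Set (ℝ × ℝ)) :=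
  (forall_fermatWeberCost_le_iff u).trans <|
    (fermatWeberCost_le_seven_iff h0).trans (mem_convexHull_triangle_iff _ _).symm
end

section
/- Let v_1, ..., v_m ∈ R^n and let v_0 be a tropical Fermat-Weber point of v_1, ..., v_m. Then v_0 is the unique (up to adding multiples of the all-ones vector) tropical Fermat-Weber point of the m+1 points v_0, v_1, ..., v_m; that is, any u with Σ_{i=0}^m d_tr(u, v_i) ≤ Σ_{i=0}^m d_tr(v_0, v_i) satisfies d_tr(u, v_0) = 0. -/
theorem stmt11 {m n : ℕ} [NeZero n] (v : Fin m → Fin n → ℝ)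
    (v₀ : Fin n → ℝ)
    (h : ∀ w : Fin n → ℝ, ∑ i, dtr v₀ (v i) ≤ ∑ i, dtr w (v i))
    (u : Fin n → ℝ)
    (hu : dtr u v₀ + ∑ i, dtr u (v i) ≤ dtr v₀ v₀ + ∑ i, dtr v₀ (v i)) :
    dtr u v₀ = 0 := by
  have hself : dtr v₀ v₀ = 0 := by
    unfold dtr
    apply le_antisymm
    · apply Finset.sup'_le
      intro p _
      simp
    · exact Finset.le_sup'_of_le _ (Finset.mem_univ (⟨0, 0⟩ : Fin n × Fin n))
        (by simp)
  have hnonneg : 0 ≤ dtr u v₀ := by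
    unfold dtr
    exact le_trans (abs_nonneg (u 0 - u 0 - v₀ 0 + v₀ 0))
      (Finset.le_sup' (fun p : Fin n × Fin n => |u p.1 - u p.2 - v₀ p.1 + v₀ p.2|)
        (Finset.mem_univ (⟨0, 0⟩ : Fin n × Fin n)))
  have hle : dtr u v₀ ≤ 0 := by
    have := h u
    linarith [hu, hself]
  linarith
end

section
/- For n ≥ 4, define an n × n matrix M by M_{i,j} = 1 if j − i ≡ 0 or 1 (mod n), M_{i,j} = −1 if j − i ≡ 2 or 3 (mod n), and M_{i,j} = 0 otherwise. Let v_1, ..., v_n be the rows of M. Then the zero vector is a tropical Fermat-Weber point of v_1, ..., v_n, and any tropical Fermat-Weber point a of v_1, ..., v_n satisfies a_1 = a_2 = ... = a_n (i.e., a = 0 in R^n / R·1). -/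
open Fin.NatCast in
theorem Fin.apply_eq_of_forall_apply_add_one_eq {α : Type*} {n : ℕ} [NeZero n] {f : Fin n → α}
    (h : ∀ j, f (j + 1) = f j) (i j : Fin n) : f i = f j := by
  have shift : ∀ k : ℕ, f (i + k) = f i := by
    intro k
    induction k with
    | zero => simp
    | succ k ih => rw [Nat.cast_succ, ← add_assoc, h, ih]
  simpa using (shift (j - i).val).symm

theorem Fin.val_add_add_sub_val_mod {n : ℕ} (i k : Fin n) :
    ((i + k).val + n - i.val) % n = k.val := by
  have hmod : (i + k).val + n - i.val = k.val + n ∨ (i + k).val + n - i.val = k.val := by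
    rw [Fin.val_add]
    rcases lt_or_ge (i.val + k.val) n with h | h
    · rw [Nat.mod_eq_of_lt h]; omega
    · rw [Nat.mod_eq_sub_mod h, Nat.mod_eq_of_lt (by omega)]; omega
  rcases hmod with h | h <;> simp [h, Nat.mod_eq_of_lt k.isLt]

section Dtr

variable {n : ℕ} [NeZero n]

theorem abs_sub_sub_le_dtr (u v : Fin n → ℝ) (p q : Fin n) :
    |u p - u q - v p + v q| ≤ dtr u v :=
  Finset.le_sup' (fun p : Fin n × Fin n => |u p.1 - u p.2 - v p.1 + v p.2|)
    (Finset.mem_univ (p, q))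

theorem dtr_zero_le {v : Fin n → ℝ} {c : ℝ} (hv : ∀ j, |v j| ≤ c) : dtr 0 v ≤ 2 * c :=
  Finset.sup'_le _ _ fun p _ =>
    calc |(0 : Fin n → ℝ) p.1 - (0 : Fin n → ℝ) p.2 - v p.1 + v p.2| = |v p.2 - v p.1| := by
          simp only [Pi.zero_apply]; ring_nf
      _ ≤ |v p.2| + |v p.1| := abs_sub _ _
      _ ≤ 2 * c := by linarith [hv p.1, hv p.2]

theorem two_sub_add_le_dtr (w : Fin n → ℝ) {v : Fin n → ℝ} {p q : Fin n}
    (hp : v p = 1) (hq : v q = -1) : 2 - w p + w q ≤ dtr w v := by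
  have h := abs_sub_sub_le_dtr w v p q
  rw [hp, hq] at h
  linarith [neg_abs_le (w p - w q - 1 + -1)]

theorem sum_two_sub_add_eq (w : Fin n → ℝ) (c d : Fin n) :
    ∑ i, (2 - w (i + c) + w (i + d)) = 2 * n := by
  have shift (e : Fin n) : ∑ i, w (i + e) = ∑ i, w i := Equiv.sum_comp (Equiv.addRight e) w
  rw [Finset.sum_add_distrib, Finset.sum_sub_distrib, shift, shift]
  simp [mul_comm]

end Dtr

section Circulant

variable {n : ℕ} [NeZero n] {M : Fin n → Fin n → ℝ}
  (hM₁ : ∀ i, M i (i + 1) = 1) (hM₃ : ∀ i, M i (i + 3) = -1)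
include hM₁ hM₃

theorem two_mul_le_sum_dtr (w : Fin n → ℝ) : 2 * n ≤ ∑ i, dtr w (M i) :=
  calc (2 * n : ℝ) = ∑ i, (2 - w (i + 1) + w (i + 3)) := (sum_two_sub_add_eq w 1 3).symm
    _ ≤ ∑ i, dtr w (M i) := Finset.sum_le_sum fun i _ => two_sub_add_le_dtr w (hM₁ i) (hM₃ i)

theorem dtr_le_of_sum_dtr_le {a : Fin n → ℝ} (ha : ∑ i, dtr a (M i) ≤ 2 * n) (i : Fin n) :
    dtr a (M i) ≤ 2 - a (i + 1) + a (i + 3) := by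
  have h := Finset.single_le_sum
    (f := fun j => dtr a (M j) - (2 - a (j + 1) + a (j + 3)))
    (fun j _ => sub_nonneg.2 (two_sub_add_le_dtr a (hM₁ j) (hM₃ j))) (Finset.mem_univ i)
  rw [Finset.sum_sub_distrib, sum_two_sub_add_eq] at h
  linarith

open Fin.CommRing in
theorem apply_add_one_eq_of_sum_dtr_le (hM₀ : ∀ i, M i i = 1) (hM₂ : ∀ i, M i (i + 2) = -1)
    {a : Fin n → ℝ} (ha : ∑ i, dtr a (M i) ≤ 2 * n) (j : Fin n) : a (j + 1) = a j := by
  have hle : a (j + 1) ≤ a j := by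
    linarith [two_sub_add_le_dtr a (hM₀ j) (hM₃ j), dtr_le_of_sum_dtr_le hM₁ hM₃ ha j]
  have hge : a j ≤ a (j + 1) := by
    have h₂ := two_sub_add_le_dtr a (hM₁ (j - 2)) (hM₂ (j - 2))
    have h₃ := dtr_le_of_sum_dtr_le hM₁ hM₃ ha (j - 2)
    rw [show j - 2 + 2 = j by ring] at h₂
    rw [show j - 2 + 3 = j + 1 by ring] at h₃
    linarith
  exact le_antisymm hle hge

end Circulant

theorem stmt12 {n : ℕ} [NeZero n] (hn : 4 ≤ n)
    (M : Fin n → Fin n → ℝ)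
    (hM : ∀ i j : Fin n,
      M i j =
        if (j.val + n - i.val) % n = 0 ∨ (j.val + n - i.val) % n = 1 then 1
        else if (j.val + n - i.val) % n = 2 ∨ (j.val + n - i.val) % n = 3 then -1
        else 0) :
    (∀ w : Fin n → ℝ, ∑ i, dtr 0 (M i) ≤ ∑ i, dtr w (M i)) ∧
    (∀ a : Fin n → ℝ,
      (∀ w : Fin n → ℝ, ∑ i, dtr a (M i) ≤ ∑ i, dtr w (M i)) →
      ∀ i j : Fin n, a i = a j) := by
  have hM_offset (i k : Fin n) : M i (i + k) =
      if k.val = 0 ∨ k.val = 1 then 1 else if k.val = 2 ∨ k.val = 3 then -1 else 0 := by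
    rw [hM, Fin.val_add_add_sub_val_mod]
  have hM₀ (i : Fin n) : M i i = 1 := by simpa using hM_offset i 0
  have hM₁ (i : Fin n) : M i (i + 1) = 1 := by
    simp [hM_offset, Nat.mod_eq_of_lt (show 1 < n by omega)]
  have hM₂ (i : Fin n) : M i (i + 2) = -1 := by
    simp [hM_offset, Nat.mod_eq_of_lt (show 2 < n by omega)]
  have hM₃ (i : Fin n) : M i (i + 3) = -1 := by
    simp [hM_offset, Nat.mod_eq_of_lt (show 3 < n by omega)]
  have hzero : ∑ i, dtr 0 (M i) ≤ 2 * n := by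
    have hbound (i j : Fin n) : |M i j| ≤ 1 := by rw [hM]; split_ifs <;> norm_num
    calc ∑ i, dtr 0 (M i) ≤ ∑ _i : Fin n, 2 * 1 :=
          Finset.sum_le_sum fun i _ => dtr_zero_le (hbound i)
      _ = 2 * n := by simp [mul_comm]
  exact ⟨fun w => hzero.trans (two_mul_le_sum_dtr hM₁ hM₃ w), fun a ha =>
    Fin.apply_eq_of_forall_apply_add_one_eq
      (apply_add_one_eq_of_sum_dtr_le hM₁ hM₃ hM₀ hM₂ ((ha 0).trans hzero))⟩
end

section
/- Let u, v ∈ R^n with d = d_tr(u,v) > 0, let peak(u,v) = argmax_i (u_i − v_i) and valley(u,v) = argmin_i (u_i − v_i), and let ε > 0 be smaller than every nonzero value |(u_i − v_i) − (u_j − v_j)| for i < j. Let ε_i denote the vector with ε in coordinate i and 0 elsewhere. Then d_tr(u + ε_i, v) equals: d if i is in neither peak(u,v) nor valley(u,v); d + ε if i ∈ peak(u,v); d − ε if i ∈ valley(u,v) and |valley(u,v)| = 1; and d if i ∈ valley(u,v) and |valley(u,v)| ≥ 2. -/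
open Finset Function

theorem le_update_add {ι α : Type*} [DecidableEq ι] [AddCommMonoid α] [Preorder α]
    [IsOrderedAddMonoid α] {w : ι → α} {i : ι} {ε : α} (hε : 0 ≤ ε) : w ≤ update w i (w i + ε) :=
  le_update_self_iff.2 (le_add_of_nonneg_right hε)

section FiniteExtrema

variable {ι α : Type*} [Fintype ι] [Nonempty ι] [LinearOrder α] {f : ι → α} {i : ι}

theorem sup'_univ_eq_of_forall_le (h : ∀ j, f j ≤ f i) : univ.sup' univ_nonempty f = f i :=
  le_antisymm (sup'_le _ _ fun j _ => h j) (le_sup' f (mem_univ i))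

theorem inf'_univ_eq_of_forall_le (h : ∀ j, f i ≤ f j) : univ.inf' univ_nonempty f = f i :=
  le_antisymm (inf'_le f (mem_univ i)) (le_inf' _ _ fun j _ => h j)

end FiniteExtrema

theorem add_le_of_lt_of_lt_abs_sub {α : Type*} [AddCommGroup α] [LinearOrder α]
    [IsOrderedAddMonoid α] {a b ε : α} (hab : a < b) (h : ε < |a - b|) : a + ε ≤ b := by
  rw [abs_sub_comm, abs_of_pos (sub_pos.2 hab)] at h
  exact (lt_sub_iff_add_lt'.1 h).le

section Spread

variable {ι α : Type*} [Fintype ι] [Nonempty ι] [AddCommGroup α] [LinearOrder α]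

def spread (w : ι → α) : α :=
  univ.sup' univ_nonempty w - univ.inf' univ_nonempty w

theorem spread_eq_zero_of_forall_eq {w : ι → α} {i : ι} (h : ∀ j, w j = w i) : spread w = 0 := by
  rw [spread, sup'_eq_of_forall _ _ fun j _ => h j, inf'_eq_of_forall _ _ fun j _ => h j, sub_self]

variable [IsOrderedAddMonoid α]

theorem sup'_abs_sub_eq_spread (w : ι → α) :
    univ.sup' univ_nonempty (fun p : ι × ι => |w p.1 - w p.2|) = spread w := by
  apply le_antisymm
  · refine sup'_le _ _ fun p _ => abs_sub_le_iff.2 ⟨?_, ?_⟩ <;>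
      exact sub_le_sub (le_sup' w (mem_univ _)) (inf'_le w (mem_univ _))
  · obtain ⟨a, -, ha⟩ := exists_mem_eq_sup' univ_nonempty w
    obtain ⟨b, -, hb⟩ := exists_mem_eq_inf' univ_nonempty w
    refine le_sup'_of_le _ (mem_univ (a, b)) ?_
    rw [spread, ha, hb]
    exact le_abs_self _

variable [DecidableEq ι] {w : ι → α} {i j k : ι} {ε : α}

theorem sup'_update_add_of_forall_le (hε : 0 ≤ ε) (hi : ∀ j, w j ≤ w i) :
    univ.sup' univ_nonempty (update w i (w i + ε)) = univ.sup' univ_nonempty w + ε := by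
  have hmax : ∀ j, update w i (w i + ε) j ≤ update w i (w i + ε) i := fun j => by
    rw [update_self]
    rcases eq_or_ne j i with rfl | hji
    · rw [update_self]
    · rw [update_of_ne hji]
      exact (hi j).trans (le_add_of_nonneg_right hε)
  rw [sup'_univ_eq_of_forall_le hi, sup'_univ_eq_of_forall_le hmax, update_self]

theorem sup'_update_add_of_add_le (hε : 0 ≤ ε) (hij : w i + ε ≤ w j) :
    univ.sup' univ_nonempty (update w i (w i + ε)) = univ.sup' univ_nonempty w := by
  refine le_antisymm (sup'_le _ _ fun k _ => ?_) (sup'_mono_fun fun k _ => le_update_add hε k)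
  rcases eq_or_ne k i with rfl | hki
  · rw [update_self]
    exact le_sup'_of_le w (mem_univ j) hij
  · rw [update_of_ne hki]
    exact le_sup' w (mem_univ k)

theorem inf'_update_add_of_ne_of_le (hε : 0 ≤ ε) (hki : k ≠ i) (hk : w k ≤ w i) :
    univ.inf' univ_nonempty (update w i (w i + ε)) = univ.inf' univ_nonempty w := by
  refine le_antisymm (le_inf' _ _ fun j _ => ?_) (inf'_mono_fun fun j _ => le_update_add hε j)
  rcases eq_or_ne j i with rfl | hji
  · exact inf'_le_of_le _ (mem_univ k) (by rwa [update_of_ne hki])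
  · exact inf'_le_of_le _ (mem_univ j) (by rw [update_of_ne hji])

theorem inf'_update_add_of_forall_add_le (hε : 0 ≤ ε) (hi : ∀ k ≠ i, w i + ε ≤ w k) :
    univ.inf' univ_nonempty (update w i (w i + ε)) = univ.inf' univ_nonempty w + ε := by
  have hw : ∀ k, w i ≤ w k := fun k => by
    rcases eq_or_ne k i with rfl | hki
    · rfl
    · exact (le_add_of_nonneg_right hε).trans (hi k hki)
  have hmin : ∀ k, update w i (w i + ε) i ≤ update w i (w i + ε) k := fun k => by
    rw [update_self]
    rcases eq_or_ne k i with rfl | hki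
    · rw [update_self]
    · rw [update_of_ne hki]
      exact hi k hki
  rw [inf'_univ_eq_of_forall_le hw, inf'_univ_eq_of_forall_le hmin, update_self]

theorem spread_update_add_of_add_le_of_le (hε : 0 ≤ ε) (hij : w i + ε ≤ w j) (hki : k ≠ i)
    (hk : w k ≤ w i) : spread (update w i (w i + ε)) = spread w := by
  rw [spread, spread, sup'_update_add_of_add_le hε hij, inf'_update_add_of_ne_of_le hε hki hk]

theorem spread_update_add_of_forall_le (hε : 0 ≤ ε) (hi : ∀ j, w j ≤ w i) (hki : k ≠ i) :
    spread (update w i (w i + ε)) = spread w + ε := by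
  rw [spread, spread, sup'_update_add_of_forall_le hε hi, inf'_update_add_of_ne_of_le hε hki (hi k)]
  abel

theorem spread_update_add_of_forall_add_le (hε : 0 ≤ ε) (hi : ∀ k ≠ i, w i + ε ≤ w k)
    (hij : w i + ε ≤ w j) : spread (update w i (w i + ε)) = spread w - ε := by
  rw [spread, spread, sup'_update_add_of_add_le hε hij, inf'_update_add_of_forall_add_le hε hi]
  abel

end Spread

theorem update_add_sub {ι α : Type*} [DecidableEq ι] [AddCommGroup α] (u v : ι → α) (i : ι) (ε : α) :
    update u i (u i + ε) - v = update (u - v) i ((u - v) i + ε) := by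
  conv_lhs => rw [← update_eq_self i v]
  rw [← update_sub, Pi.sub_apply, add_sub_right_comm]

theorem dtr_eq_spread {n : ℕ} [NeZero n] (u v : Fin n → ℝ) : dtr u v = spread (u - v) := by
  rw [dtr, ← sup'_abs_sub_eq_spread]
  congr 1
  funext p
  simp only [Pi.sub_apply]
  ring_nf

theorem stmt14 {n : ℕ} [NeZero n] (u v : Fin n → ℝ)
    (hd : 0 < dtr u v) (ε : ℝ) (hε : 0 < ε)
    (hεs : ∀ i j : Fin n, u i - v i ≠ u j - v j →
      ε < |(u i - v i) - (u j - v j)|)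
    (peak : Finset (Fin n)) (valley : Finset (Fin n))
    (hpeak : peak = Finset.univ.filter fun i => ∀ j, u j - v j ≤ u i - v i)
    (hvalley : valley = Finset.univ.filter fun i => ∀ j, u i - v i ≤ u j - v j)
    (i : Fin n) :
    (i ∉ peak ∧ i ∉ valley →
        dtr (Function.update u i (u i + ε)) v = dtr u v) ∧
    (i ∈ peak → dtr (Function.update u i (u i + ε)) v = dtr u v + ε) ∧
    (i ∈ valley ∧ valley.card = 1 →
        dtr (Function.update u i (u i + ε)) v = dtr u v - ε) ∧
    (i ∈ valley ∧ 2 ≤ valley.card →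
        dtr (Function.update u i (u i + ε)) v = dtr u v) := by
  set w := u - v
  have hgap : ∀ j k, w j < w k → w j + ε ≤ w k := fun j k hjk =>
    add_le_of_lt_of_lt_abs_sub hjk (hεs j k hjk.ne)
  have hmem_peak : i ∈ peak ↔ ∀ j, w j ≤ w i := by simp [hpeak, w]
  have hmem_valley : ∀ k, k ∈ valley ↔ ∀ j, w k ≤ w j := by simp [hvalley, w]
  have hnot_both : i ∈ peak → i ∉ valley := fun hp hv => hd.ne' <| by
    rw [dtr_eq_spread]
    exact spread_eq_zero_of_forall_eq fun j =>
      le_antisymm (hmem_peak.1 hp j) ((hmem_valley i).1 hv j)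
  have higher : i ∉ peak → ∃ j, w i + ε ≤ w j := fun hp =>
    (not_forall.1 (mt hmem_peak.2 hp)).imp fun j hj => hgap i j (not_le.1 hj)
  have lower : i ∉ valley → ∃ k ≠ i, w k ≤ w i := fun hv =>
    (not_forall.1 (mt (hmem_valley i).2 hv)).imp fun k hk =>
      ⟨ne_of_apply_ne w (not_le.1 hk).ne, (not_le.1 hk).le⟩
  rw [dtr_eq_spread, dtr_eq_spread, update_add_sub]
  refine ⟨fun ⟨hp, hv⟩ => ?_, fun hp => ?_, fun ⟨hv, hcard⟩ => ?_, fun ⟨hv, hcard⟩ => ?_⟩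
  · obtain ⟨j, hj⟩ := higher hp
    obtain ⟨k, hki, hk⟩ := lower hv
    exact spread_update_add_of_add_le_of_le hε.le hj hki hk
  · obtain ⟨k, hki, -⟩ := lower (hnot_both hp)
    exact spread_update_add_of_forall_le hε.le (hmem_peak.1 hp) hki
  · obtain ⟨j, hj⟩ := higher fun hp => hnot_both hp hv
    refine spread_update_add_of_forall_add_le hε.le (fun k hki => hgap i k ?_) hj
    refine lt_of_not_ge fun hki' => hki (card_le_one.1 hcard.le k ?_ i hv)
    exact (hmem_valley k).2 fun j => hki'.trans ((hmem_valley i).1 hv j)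
  · obtain ⟨j, hj⟩ := higher fun hp => hnot_both hp hv
    obtain ⟨k, hk, hki⟩ := exists_mem_ne hcard i
    exact spread_update_add_of_add_le_of_le hε.le hj hki ((hmem_valley k).1 hk i)
end

section
/- Let u, v ∈ R^n with d = d_tr(u,v) > 0, and let ε > 0 be smaller than every nonzero value |(u_i − v_i) − (u_j − v_j)| for i < j. Then Σ_{i=1}^n [d_tr(u + ε_i, v) + d_tr(u − ε_i, v)] = 2n·d + [f(|peak(u,v)|) + f(|valley(u,v)|)]·ε, where f(1) = 0 and f(k) = k for k ≥ 2, ε_i is ε in coordinate i and 0 elsewhere. -/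
open Finset

lemma dtr_eq_range {n : ℕ} [NeZero n] (u v : Fin n → ℝ) :
    dtr u v = Finset.univ.sup' Finset.univ_nonempty (fun i => u i - v i)
      - Finset.univ.inf' Finset.univ_nonempty (fun i => u i - v i) := by
  set w : Fin n → ℝ := fun i => u i - v i with hw
  apply le_antisymm
  · apply Finset.sup'_le
    intro p _
    have hW : u p.1 - u p.2 - v p.1 + v p.2 = w p.1 - w p.2 := by simp only [hw]; ring
    rw [hW]
    have h1 : w p.1 ≤ univ.sup' univ_nonempty w := le_sup' _ (mem_univ _)
    have h2 : univ.inf' univ_nonempty w ≤ w p.2 := inf'_le _ (mem_univ _)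
    have h3 : w p.2 ≤ univ.sup' univ_nonempty w := le_sup' _ (mem_univ _)
    have h4 : univ.inf' univ_nonempty w ≤ w p.1 := inf'_le _ (mem_univ _)
    rw [abs_le]; constructor <;> linarith
  · obtain ⟨i, -, hi⟩ := exists_mem_eq_sup' univ_nonempty w
    obtain ⟨j, -, hj⟩ := exists_mem_eq_inf' univ_nonempty w
    have h2 : univ.inf' univ_nonempty w ≤ univ.sup' univ_nonempty w :=
      le_trans (inf'_le _ (mem_univ i)) (le_sup' _ (mem_univ i))
    have hval : univ.sup' univ_nonempty w - univ.inf' univ_nonempty w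
        = |u i - u j - v i + v j| := by
      have hWij : u i - u j - v i + v j = w i - w j := by simp only [hw]; ring
      have hle : w j ≤ w i := by rw [← hi, ← hj]; exact h2
      rw [hWij, abs_of_nonneg (by linarith), hi, hj]
    rw [hval]
    exact le_sup' (fun p : Fin n × Fin n => |u p.1 - u p.2 - v p.1 + v p.2|) (mem_univ (i, j))

lemma range_update {n : ℕ} [NeZero n] (w : Fin n → ℝ) (i : Fin n) (ε : ℝ) (hε : 0 < ε)
    (hεs : ∀ j, w i ≠ w j → ε < |w i - w j|)
    (hlt : Finset.univ.inf' Finset.univ_nonempty w < Finset.univ.sup' Finset.univ_nonempty w) :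
    Finset.univ.sup' Finset.univ_nonempty (Function.update w i (w i + ε))
      - Finset.univ.inf' Finset.univ_nonempty (Function.update w i (w i + ε))
    = Finset.univ.sup' Finset.univ_nonempty w - Finset.univ.inf' Finset.univ_nonempty w
      + (if ∀ j, w j ≤ w i then ε
         else if (∀ j, w i ≤ w j) ∧ (Finset.univ.filter fun k => ∀ j, w k ≤ w j).card = 1
           then -ε else 0) := by
  set M := Finset.univ.sup' Finset.univ_nonempty w with hM
  set m := Finset.univ.inf' Finset.univ_nonempty w with hm
  have hwM : ∀ j, w j ≤ M := fun j => le_sup' _ (mem_univ j)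
  have hmw : ∀ j, m ≤ w j := fun j => inf'_le _ (mem_univ j)
  obtain ⟨jM, -, hjM⟩ := exists_mem_eq_sup' (univ_nonempty (α := Fin n)) w
  obtain ⟨jm, -, hjm⟩ := exists_mem_eq_inf' (univ_nonempty (α := Fin n)) w
  rw [← hM] at hjM
  rw [← hm] at hjm
  set w' := Function.update w i (w i + ε) with hw'
  have hw'i : w' i = w i + ε := Function.update_self i _ w
  have hw'j : ∀ j, j ≠ i → w' j = w j := fun j hj => Function.update_of_ne hj _ _
  by_cases hiM : ∀ j, w j ≤ w i
  · -- i is a peak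
    have hwiM : w i = M := le_antisymm (hwM i) (by rw [hjM]; exact hiM jM)
    have hS : univ.sup' univ_nonempty w' = M + ε := by
      apply le_antisymm
      · apply sup'_le
        intro j _
        by_cases hj : j = i
        · rw [hj, hw'i, hwiM]
        · rw [hw'j j hj]; linarith [hwM j]
      · calc M + ε = w' i := by rw [hw'i, hwiM]
          _ ≤ _ := le_sup' _ (mem_univ i)
    have hI : univ.inf' univ_nonempty w' = m := by
      have hjmi : jm ≠ i := by
        intro h; rw [h] at hjm
        rw [hwiM] at hjm; linarith
      apply le_antisymm
      · calc univ.inf' univ_nonempty w' ≤ w' jm := inf'_le _ (mem_univ jm)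
          _ = m := by rw [hw'j jm hjmi, ← hjm]
      · apply le_inf'
        intro j _
        by_cases hj : j = i
        · rw [hj, hw'i]; linarith [hmw i]
        · rw [hw'j j hj]; exact hmw j
    rw [hS, hI, if_pos hiM]; ring
  · -- i is not a peak
    have hne : w i ≠ w jM := by
      intro h; apply hiM; intro j; rw [h, ← hjM]; exact hwM j
    have hiltM : w i + ε < M := by
      have h1 := hεs jM hne
      have h2 : w i < w jM := lt_of_le_of_ne (by rw [← hjM]; exact hwM i) hne
      rw [abs_of_neg (by linarith)] at h1
      rw [hjM]; linarith
    have hjMi : jM ≠ i := by intro h; apply hne; rw [h]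
    have hS : univ.sup' univ_nonempty w' = M := by
      apply le_antisymm
      · apply sup'_le
        intro j _
        by_cases hj : j = i
        · rw [hj, hw'i]; linarith
        · rw [hw'j j hj]; exact hwM j
      · calc M = w' jM := by rw [hw'j jM hjMi, hjM]
          _ ≤ _ := le_sup' _ (mem_univ jM)
    by_cases him : ∀ j, w i ≤ w j
    · -- i is a valley
      have hwim : w i = m := le_antisymm (by rw [hjm]; exact him jm) (hmw i)
      by_cases hcard : (Finset.univ.filter fun k => ∀ j, w k ≤ w j).card = 1
      · -- i is the unique valley
        have hionly : ∀ j, j ≠ i → m < w j := by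
          intro j hj
          rcases lt_or_eq_of_le (hmw j) with h | h
          · exact h
          · exfalso
            have hjf : j ∈ Finset.univ.filter fun k => ∀ j, w k ≤ w j := by
              simp only [mem_filter, mem_univ, true_and]
              intro k; rw [← h]; exact hmw k
            have hif : i ∈ Finset.univ.filter fun k => ∀ j, w k ≤ w j := by
              simp only [mem_filter, mem_univ, true_and]; exact him
            obtain ⟨x, hx⟩ := Finset.card_eq_one.mp hcard
            rw [hx, mem_singleton] at hjf hif
            exact hj (hjf.trans hif.symm)
        have hI : univ.inf' univ_nonempty w' = m + ε := by
          apply le_antisymm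
          · calc univ.inf' univ_nonempty w' ≤ w' i := inf'_le _ (mem_univ i)
              _ = m + ε := by rw [hw'i, hwim]
          · apply le_inf'
            intro j _
            by_cases hj : j = i
            · rw [hj, hw'i, hwim]
            · rw [hw'j j hj]
              have h1 : m < w j := hionly j hj
              have h2 := hεs j (by rw [hwim]; exact ne_of_lt h1)
              rw [abs_of_neg (by rw [hwim]; linarith)] at h2
              rw [hwim] at h2; linarith
        rw [hS, hI, if_neg hiM, if_pos ⟨him, hcard⟩]; ring
      · -- there is another valley element
        have hex : ∃ j, j ≠ i ∧ w j = m := by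
          by_contra h
          push_neg at h
          apply hcard
          have hif : i ∈ Finset.univ.filter fun k => ∀ j, w k ≤ w j := by
            simp only [mem_filter, mem_univ, true_and]; exact him
          have hsub : (Finset.univ.filter fun k => ∀ j, w k ≤ w j) ⊆ {i} := by
            intro k hk
            simp only [mem_filter, mem_univ, true_and] at hk
            rw [mem_singleton]
            by_contra hki
            exact absurd (le_antisymm (by rw [hjm]; exact hk jm) (hmw k)) (h k hki)
          have h1 : (Finset.univ.filter fun k => ∀ j, w k ≤ w j).card ≤ 1 := by
            simpa using Finset.card_le_card hsub
          have h2 : 0 < (Finset.univ.filter fun k => ∀ j, w k ≤ w j).card :=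
            Finset.card_pos.mpr ⟨i, hif⟩
          omega
        obtain ⟨j, hji, hjm'⟩ := hex
        have hI : univ.inf' univ_nonempty w' = m := by
          apply le_antisymm
          · calc univ.inf' univ_nonempty w' ≤ w' j := inf'_le _ (mem_univ j)
              _ = m := by rw [hw'j j hji, hjm']
          · apply le_inf'
            intro k _
            by_cases hk : k = i
            · rw [hk, hw'i]; linarith [hmw i]
            · rw [hw'j k hk]; exact hmw k
        rw [hS, hI, if_neg hiM, if_neg (by rintro ⟨-, h⟩; exact hcard h)]; ring
    · -- i is neither peak nor valley
      push_neg at him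
      obtain ⟨j0, hj0⟩ := him
      have hmlt : m < w i := lt_of_le_of_lt (hmw j0) hj0
      have hjmi : jm ≠ i := by intro h; rw [h] at hjm; linarith [hjm ▸ hmlt]
      have hI : univ.inf' univ_nonempty w' = m := by
        apply le_antisymm
        · calc univ.inf' univ_nonempty w' ≤ w' jm := inf'_le _ (mem_univ jm)
            _ = m := by rw [hw'j jm hjmi, ← hjm]
        · apply le_inf'
          intro k _
          by_cases hk : k = i
          · rw [hk, hw'i]; linarith
          · rw [hw'j k hk]; exact hmw k
      rw [hS, hI, if_neg hiM, if_neg (by rintro ⟨h, -⟩; exact absurd (h j0) (not_le.mpr hj0))]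
      ring

lemma sup'_of_neg {n : ℕ} [NeZero n] (g : Fin n → ℝ) :
    Finset.univ.sup' Finset.univ_nonempty (fun j => -g j)
      = - Finset.univ.inf' Finset.univ_nonempty g := by
  apply le_antisymm
  · apply sup'_le
    intro j _
    exact neg_le_neg (inf'_le _ (mem_univ j))
  · rw [neg_le]
    apply le_inf'
    intro j _
    rw [neg_le]
    exact le_sup' (fun j => -g j) (mem_univ j)

lemma inf'_of_neg {n : ℕ} [NeZero n] (g : Fin n → ℝ) :
    Finset.univ.inf' Finset.univ_nonempty (fun j => -g j)
      = - Finset.univ.sup' Finset.univ_nonempty g := by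
  apply le_antisymm
  · rw [le_neg]
    apply sup'_le
    intro j _
    rw [le_neg]
    exact inf'_le (fun j => -g j) (mem_univ j)
  · apply le_inf'
    intro j _
    exact neg_le_neg (le_sup' _ (mem_univ j))

lemma range_neg {n : ℕ} [NeZero n] (g : Fin n → ℝ) :
    Finset.univ.sup' Finset.univ_nonempty (fun j => -g j)
      - Finset.univ.inf' Finset.univ_nonempty (fun j => -g j)
    = Finset.univ.sup' Finset.univ_nonempty g
      - Finset.univ.inf' Finset.univ_nonempty g := by
  rw [sup'_of_neg, inf'_of_neg]; ring

theorem stmt15 {n : ℕ} [NeZero n] (u v : Fin n → ℝ)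
    (hd : 0 < dtr u v) (ε : ℝ) (hε : 0 < ε)
    (hεs : ∀ i j : Fin n, u i - v i ≠ u j - v j →
      ε < |(u i - v i) - (u j - v j)|)
    (f : ℕ → ℝ) (hf : ∀ k : ℕ, f k = if k = 1 then 0 else (k : ℝ))
    (peak : Finset (Fin n)) (valley : Finset (Fin n))
    (hpeak : peak = Finset.univ.filter fun i => ∀ j, u j - v j ≤ u i - v i)
    (hvalley : valley = Finset.univ.filter fun i => ∀ j, u i - v i ≤ u j - v j) :
    ∑ i : Fin n,
        (dtr (Function.update u i (u i + ε)) v +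
          dtr (Function.update u i (u i - ε)) v) =
      2 * n * dtr u v + (f peak.card + f valley.card) * ε := by
  have hdr := dtr_eq_range u v
  have hlt : Finset.univ.inf' Finset.univ_nonempty (fun i => u i - v i)
      < Finset.univ.sup' Finset.univ_nonempty (fun i => u i - v i) := by linarith
  -- the "+ε" key
  have keyp : ∀ i : Fin n, dtr (Function.update u i (u i + ε)) v = dtr u v +
      (if i ∈ peak then ε else if i ∈ valley ∧ valley.card = 1 then -ε else 0) := by
    intro i
    have hru := range_update (fun k => u k - v k) i ε hε
        (fun j hne => hεs i j hne) hlt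
    have e3 : (Finset.univ.filter fun k => ∀ j, u k - v k ≤ u j - v j) = valley :=
      hvalley.symm
    rw [e3] at hru
    have e1 : (∀ j, u j - v j ≤ u i - v i) ↔ i ∈ peak := by
      rw [hpeak]; simp
    have e2 : (∀ j, u i - v i ≤ u j - v j) ↔ i ∈ valley := by
      rw [hvalley]; simp
    have e4 : (fun j => Function.update u i (u i + ε) j - v j)
        = Function.update (fun k => u k - v k) i (u i - v i + ε) := by
      funext j
      by_cases hj : j = i
      · subst hj; simp only [Function.update_self]; ring
      · simp only [Function.update_of_ne hj]
    rw [dtr_eq_range (Function.update u i (u i + ε)) v, e4, hru, hdr]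
    congr 1
    exact if_congr e1 rfl (if_congr (and_congr e2 Iff.rfl) rfl rfl)
  -- the "-ε" key
  have keym : ∀ i : Fin n, dtr (Function.update u i (u i - ε)) v = dtr u v +
      (if i ∈ valley then ε else if i ∈ peak ∧ peak.card = 1 then -ε else 0) := by
    intro i
    have hA : Finset.univ.sup' Finset.univ_nonempty (fun k => -(u k - v k))
        = - Finset.univ.inf' Finset.univ_nonempty (fun k => u k - v k) := sup'_of_neg _
    have hB : Finset.univ.inf' Finset.univ_nonempty (fun k => -(u k - v k))
        = - Finset.univ.sup' Finset.univ_nonempty (fun k => u k - v k) := inf'_of_neg _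
    have hlt' : Finset.univ.inf' Finset.univ_nonempty (fun k => -(u k - v k))
        < Finset.univ.sup' Finset.univ_nonempty (fun k => -(u k - v k)) := by
      rw [hA, hB]; linarith
    have hεs' : ∀ j, -(u i - v i) ≠ -(u j - v j) → ε < |-(u i - v i) - -(u j - v j)| := by
      intro j hne
      have h0 : u i - v i ≠ u j - v j := fun h => hne (by rw [h])
      have h1 := hεs i j h0
      have h2 : -(u i - v i) - -(u j - v j) = -((u i - v i) - (u j - v j)) := by ring
      rw [h2, abs_neg]
      exact h1
    have hru := range_update (fun k => -(u k - v k)) i ε hε hεs' hlt'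
    have e3 : (Finset.univ.filter fun k => ∀ j, -(u k - v k) ≤ -(u j - v j)) = peak := by
      rw [hpeak]
      apply Finset.filter_congr
      intro k _
      constructor <;> intro h j <;> linarith [h j]
    rw [e3] at hru
    have e1 : (∀ j, -(u j - v j) ≤ -(u i - v i)) ↔ i ∈ valley := by
      rw [hvalley]
      simp only [Finset.mem_filter, Finset.mem_univ, true_and]
      constructor <;> intro h j <;> linarith [h j]
    have e2 : (∀ j, -(u i - v i) ≤ -(u j - v j)) ↔ i ∈ peak := by
      rw [hpeak]
      simp only [Finset.mem_filter, Finset.mem_univ, true_and]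
      constructor <;> intro h j <;> linarith [h j]
    have e4 : (fun j => Function.update u i (u i - ε) j - v j)
        = fun j => -(Function.update (fun k => -(u k - v k)) i (-(u i - v i) + ε) j) := by
      funext j
      by_cases hj : j = i
      · subst hj; simp only [Function.update_self]; ring
      · simp only [Function.update_of_ne hj]; ring
    rw [dtr_eq_range (Function.update u i (u i - ε)) v, e4,
      range_neg (Function.update (fun k => -(u k - v k)) i (-(u i - v i) + ε)), hru, hdr]
    have hBA : Finset.univ.sup' Finset.univ_nonempty (fun k => -(u k - v k))
        - Finset.univ.inf' Finset.univ_nonempty (fun k => -(u k - v k))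
        = Finset.univ.sup' Finset.univ_nonempty (fun i => u i - v i)
          - Finset.univ.inf' Finset.univ_nonempty (fun i => u i - v i) := by
      rw [hA, hB]; ring
    rw [hBA]
    congr 1
    exact if_congr e1 rfl (if_congr (and_congr e2 Iff.rfl) rfl rfl)
  -- disjointness of peak and valley
  have hdisj : ∀ i : Fin n, i ∈ peak → i ∉ valley := by
    intro i hp hv
    rw [hpeak, Finset.mem_filter] at hp
    rw [hvalley, Finset.mem_filter] at hv
    have h1 : Finset.univ.sup' Finset.univ_nonempty (fun k => u k - v k) ≤ u i - v i :=
      sup'_le _ _ (fun j _ => hp.2 j)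
    have h2 : u i - v i ≤ Finset.univ.inf' Finset.univ_nonempty (fun k => u k - v k) :=
      le_inf' _ _ (fun j _ => hv.2 j)
    linarith
  have hsplitP : ∀ i : Fin n,
      (if i ∈ peak then ε else if i ∈ valley ∧ valley.card = 1 then -ε else 0)
      = (if i ∈ peak then ε else 0)
        + (if i ∈ valley then (if valley.card = 1 then -ε else 0) else 0) := by
    intro i
    by_cases hp : i ∈ peak
    · simp [hp, hdisj i hp]
    · by_cases hv : i ∈ valley
      · by_cases hc : valley.card = 1 <;> simp [hp, hv, hc]
      · simp [hp, hv]
  have hsplitQ : ∀ i : Fin n,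
      (if i ∈ valley then ε else if i ∈ peak ∧ peak.card = 1 then -ε else 0)
      = (if i ∈ valley then ε else 0)
        + (if i ∈ peak then (if peak.card = 1 then -ε else 0) else 0) := by
    intro i
    by_cases hv : i ∈ valley
    · have hp : i ∉ peak := fun hp => hdisj i hp hv
      simp [hv, hp]
    · by_cases hp : i ∈ peak
      · by_cases hc : peak.card = 1 <;> simp [hp, hv, hc]
      · simp [hp, hv]
  have sum_ind : ∀ (s : Finset (Fin n)) (c : ℝ),
      ∑ i : Fin n, (if i ∈ s then c else 0) = s.card * c := by
    intro s c
    rw [Finset.sum_ite_mem, Finset.univ_inter, Finset.sum_const, nsmul_eq_mul]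
  have h1 : ∑ i : Fin n,
      (dtr (Function.update u i (u i + ε)) v + dtr (Function.update u i (u i - ε)) v)
      = ∑ i : Fin n, (2 * dtr u v +
          ((if i ∈ peak then ε else 0)
            + (if i ∈ valley then (if valley.card = 1 then -ε else 0) else 0)
            + ((if i ∈ valley then ε else 0)
            + (if i ∈ peak then (if peak.card = 1 then -ε else 0) else 0)))) :=
    Finset.sum_congr rfl (fun i _ => by
      rw [keyp i, keym i, hsplitP i, hsplitQ i]; ring)
  rw [h1, Finset.sum_add_distrib, Finset.sum_add_distrib, Finset.sum_add_distrib,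
    Finset.sum_add_distrib, Finset.sum_const, Finset.card_univ, Fintype.card_fin,
    nsmul_eq_mul, sum_ind peak ε, sum_ind valley (if valley.card = 1 then -ε else 0),
    sum_ind valley ε, sum_ind peak (if peak.card = 1 then -ε else 0), hf, hf]
  by_cases hp1 : peak.card = 1 <;> by_cases hv1 : valley.card = 1 <;>
    simp [hp1, hv1] <;> ring
end

section
/- The three points (0,0,0,5), (0,0,3,1), (0,4,5,7) in R^4 have more than one tropical Fermat-Weber point modulo R·1: both (0,2,3,5) and (0,3,3,5) minimize u ↦ Σ_{i=1}^3 d_tr(u, v_i). -/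
lemma dtr_le_s17 (u v : Fin 4 → ℝ) (K : ℝ)
    (h : ∀ p : Fin 4 × Fin 4, |u p.1 - u p.2 - v p.1 + v p.2| ≤ K) :
    dtr u v ≤ K := by
  apply Finset.sup'_le
  intro p _
  exact h p

lemma le_dtr (u v : Fin 4 → ℝ) (p : Fin 4 × Fin 4) :
    |u p.1 - u p.2 - v p.1 + v p.2| ≤ dtr u v :=
  Finset.le_sup' (f := fun p : Fin 4 × Fin 4 => |u p.1 - u p.2 - v p.1 + v p.2|)
    (Finset.mem_univ p)

lemma lower9 (w : Fin 4 → ℝ) :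
    (9 : ℝ) ≤ dtr w ![0, 0, 0, 5] + dtr w ![0, 0, 3, 1] + dtr w ![0, 4, 5, 7] := by
  have h1 := le_dtr w ![0, 0, 0, 5] (0, 2)
  have h2 := le_dtr w ![0, 0, 3, 1] (2, 3)
  have h3 := le_dtr w ![0, 4, 5, 7] (0, 3)
  simp only [Matrix.cons_val_zero, Matrix.cons_val_one, Matrix.head_cons,
    Matrix.cons_val_two, Matrix.tail_cons, Matrix.cons_val_three] at h1 h2 h3
  have a1 := neg_abs_le (w 0 - w 2 - 0 + 0)
  have a2 := neg_abs_le (w 2 - w 3 - 3 + 1)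
  have a3 := le_abs_self (w 0 - w 3 - 0 + 7)
  linarith

theorem stmt17 :
    (∀ w : Fin 4 → ℝ,
        dtr ![0, 2, 3, 5] ![0, 0, 0, 5] + dtr ![0, 2, 3, 5] ![0, 0, 3, 1] +
            dtr ![0, 2, 3, 5] ![0, 4, 5, 7] ≤
          dtr w ![0, 0, 0, 5] + dtr w ![0, 0, 3, 1] + dtr w ![0, 4, 5, 7]) ∧
    (∀ w : Fin 4 → ℝ,
        dtr ![0, 3, 3, 5] ![0, 0, 0, 5] + dtr ![0, 3, 3, 5] ![0, 0, 3, 1] +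
            dtr ![0, 3, 3, 5] ![0, 4, 5, 7] ≤
          dtr w ![0, 0, 0, 5] + dtr w ![0, 0, 3, 1] + dtr w ![0, 4, 5, 7]) ∧
    ¬∃ c : ℝ, ∀ i : Fin 4,
        (![0, 2, 3, 5] : Fin 4 → ℝ) i = (![0, 3, 3, 5] : Fin 4 → ℝ) i + c := by
  have c11 : dtr ![0, 2, 3, 5] ![0, 0, 0, 5] ≤ 3 := by
    apply dtr_le_s17; rintro ⟨i, j⟩; fin_cases i <;> fin_cases j <;> norm_num [abs_le]
  have c12 : dtr ![0, 2, 3, 5] ![0, 0, 3, 1] ≤ 4 := by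
    apply dtr_le_s17; rintro ⟨i, j⟩; fin_cases i <;> fin_cases j <;> norm_num [abs_le]
  have c13 : dtr ![0, 2, 3, 5] ![0, 4, 5, 7] ≤ 2 := by
    apply dtr_le_s17; rintro ⟨i, j⟩; fin_cases i <;> fin_cases j <;> norm_num [abs_le]
  have c21 : dtr ![0, 3, 3, 5] ![0, 0, 0, 5] ≤ 3 := by
    apply dtr_le_s17; rintro ⟨i, j⟩; fin_cases i <;> fin_cases j <;> norm_num [abs_le]
  have c22 : dtr ![0, 3, 3, 5] ![0, 0, 3, 1] ≤ 4 := by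
    apply dtr_le_s17; rintro ⟨i, j⟩; fin_cases i <;> fin_cases j <;> norm_num [abs_le]
  have c23 : dtr ![0, 3, 3, 5] ![0, 4, 5, 7] ≤ 2 := by
    apply dtr_le_s17; rintro ⟨i, j⟩; fin_cases i <;> fin_cases j <;> norm_num [abs_le]
  refine ⟨fun w => ?_, fun w => ?_, ?_⟩
  · have := lower9 w; linarith
  · have := lower9 w; linarith
  · rintro ⟨c, hc⟩
    have h0 := hc 0
    have h1 := hc 1
    simp at h0 h1
    linarith
end
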